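/- Let N be a tree-based network containing two N-fences of length at least 3, N_u = (a^u_1,...,a^u_{k_u}) and N_v = (a^v_1,...,a^v_{k_v}). If there exist even indices h, i, j, k with k < h and i < j such that N has a directed path from head(a^u_h) to tail(a^v_i) and a directed path from head(a^v_j) to tail(a^u_k), then every cherry cover auxiliary graph of N contains a directed cycle; in particular N is not an orchard network. -/

import Mathlib

/-- A directed graph with a distinguished root, modelling a phylogenetic network. -/
structure Net (V : Type*) where
  verts : Set V
  root : V
  arcs : Set (V × V)

namespace Net

variable {V : Type*}

/-- In-degree of a vertex. -/
noncomputable def indeg (N : Net V) (v : V) : ℕ := {a ∈ N.arcs | a.2 = v}.ncard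

/-- Out-degree of a vertex. -/
noncomputable def outdeg (N : Net V) (v : V) : ℕ := {a ∈ N.arcs | a.1 = v}.ncard

/-- A leaf: indegree 1, outdegree 0. -/
def IsLeafV (N : Net V) (v : V) : Prop := v ∈ N.verts ∧ N.indeg v = 1 ∧ N.outdeg v = 0

/-- A tree vertex: indegree 1, outdegree 2. -/
def IsTreeV (N : Net V) (v : V) : Prop := v ∈ N.verts ∧ N.indeg v = 1 ∧ N.outdeg v = 2

/-- A reticulation: indegree 2, outdegree 1. -/
def IsReticV (N : Net V) (v : V) : Prop := v ∈ N.verts ∧ N.indeg v = 2 ∧ N.outdeg v = 1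

/-- The arc relation of the network. -/
def arcRel (N : Net V) (u w : V) : Prop := (u, w) ∈ N.arcs

/-- `N` is a rooted binary phylogenetic network. -/
def IsPhylo (N : Net V) : Prop :=
  N.verts.Finite ∧ N.arcs.Finite ∧ N.root ∈ N.verts ∧
  (∀ a ∈ N.arcs, a.1 ∈ N.verts ∧ a.2 ∈ N.verts) ∧
  N.indeg N.root = 0 ∧ N.outdeg N.root = 1 ∧
  (∀ v ∈ N.verts, v = N.root ∨ N.IsTreeV v ∨ N.IsReticV v ∨ N.IsLeafV v) ∧
  (∀ v : V, ¬ Relation.TransGen N.arcRel v v)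

end Net

open Net
namespace Net

variable {V : Type*}

/-- Reducing a cherry `(x,y)`: delete the leaf `x` and suppress its parent `p`
(which has parent `gp`). -/
def CherryRed (N N' : Net V) : Prop :=
  ∃ x y p gp : V, x ≠ y ∧ N.IsLeafV x ∧ N.IsLeafV y ∧
    (p, x) ∈ N.arcs ∧ (p, y) ∈ N.arcs ∧ (gp, p) ∈ N.arcs ∧
    N'.root = N.root ∧ N'.verts = N.verts \ {x, p} ∧
    N'.arcs = (N.arcs \ {(p, x), (p, y), (gp, p)}) ∪ {(gp, y)}

/-- Reducing a reticulation cherry `(x,y)`: delete the arc from `p_y` to the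
reticulation `p_x`, and suppress the resulting degree-(1,1) vertices `p_x`, `p_y`. -/
def ReticCherryRed (N N' : Net V) : Prop :=
  ∃ x y px py qx qy : V, x ≠ y ∧ N.IsLeafV x ∧ N.IsLeafV y ∧
    (px, x) ∈ N.arcs ∧ (py, px) ∈ N.arcs ∧ (py, y) ∈ N.arcs ∧
    N.indeg px = 2 ∧ (qx, px) ∈ N.arcs ∧ qx ≠ py ∧ (qy, py) ∈ N.arcs ∧
    N'.root = N.root ∧ N'.verts = N.verts \ {px, py} ∧
    N'.arcs = (N.arcs \ {(py, px), (qx, px), (px, x), (qy, py), (py, y)}) ∪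
      {(qx, x), (qy, y)}

/-- One cherry-picking step: a cherry reduction or a reticulation cherry reduction. -/
def RedStep (N N' : Net V) : Prop := CherryRed N N' ∨ ReticCherryRed N N'

/-- A network consisting of a root and a single leaf. -/
def IsSingleLeaf (N : Net V) : Prop :=
  ∃ l : V, l ≠ N.root ∧ N.verts = {N.root, l} ∧ N.arcs = {(N.root, l)}

/-- A network is orchard if some finite sequence of cherry and reticulation
cherry reductions reduces it to a network with a single leaf. -/
def IsOrchard (N : Net V) : Prop :=
  ∃ N' : Net V, Relation.ReflTransGen RedStep N N' ∧ IsSingleLeaf N'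

end Net
/-- A cherry shape `cherry p x y` (arcs `px, py`) or a reticulation cherry shape
`retic px py x y` (arcs `p_x x, p_y p_x, p_y y`). -/
inductive Shape (V : Type*) where
  | cherry (p x y : V)
  | retic (px py x y : V)

namespace Shape

variable {V : Type*}

/-- The arcs covered by a shape. -/
def shapeArcs : Shape V → Set (V × V)
  | .cherry p x y => {(p, x), (p, y)}
  | .retic px py x y => {(px, x), (py, px), (py, y)}

/-- The endpoints of a shape. -/
def endpoints : Shape V → Set V
  | .cherry _ x y => {x, y}
  | .retic _ _ x y => {x, y}

/-- The internal vertices of a shape. -/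
def internals : Shape V → Set V
  | .cherry p _ _ => {p}
  | .retic px py _ _ => {px, py}

/-- Whether the shape is a reticulation cherry shape. -/
def IsReticShape : Shape V → Prop
  | .cherry _ _ _ => False
  | .retic _ _ _ _ => True

/-- Validity of a shape inside a network `N`: its arcs are pairwise distinct and
the distinguished vertex `p_x` of a reticulation cherry shape is a reticulation. -/
def IsValid (N : Net V) : Shape V → Prop
  | .cherry _ x y => x ≠ y
  | .retic px py x y => N.IsReticV px ∧ px ≠ py ∧ px ≠ y ∧ x ≠ y

end Shape

namespace Net

variable {V : Type*}

/-- A cherry cover of `N`: a collection of valid cherry shapes and reticulation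
cherry shapes such that every arc of `N` except the root arc is covered exactly
once, and the root arc is covered by no shape. -/
def IsCherryCover (N : Net V) (P : Set (Shape V)) : Prop :=
  (∀ S ∈ P, S.shapeArcs ⊆ N.arcs ∧ S.IsValid N) ∧
  (∀ a ∈ N.arcs, a.1 ≠ N.root → ∃! S : Shape V, S ∈ P ∧ a ∈ S.shapeArcs) ∧
  (∀ S ∈ P, ∀ a ∈ S.shapeArcs, a.1 ≠ N.root)

/-- The arc relation of the cherry covering auxiliary graph of `P`:
there is an arc from `B` to `B'` if an internal vertex of `B'` is an endpoint of `B`. -/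
def AuxRel (P : Set (Shape V)) (B B' : Shape V) : Prop :=
  B ∈ P ∧ B' ∈ P ∧ ∃ w ∈ B'.internals, w ∈ B.endpoints

/-- A cherry cover is acyclic if its auxiliary graph has no directed cycle. -/
def AuxAcyclic (P : Set (Shape V)) : Prop :=
  ∀ B : Shape V, ¬ Relation.TransGen (AuxRel P) B B

end Net
namespace Net

variable {V : Type*}

/-- A zig-zag trail in the arc set `A`: a nonempty sequence of distinct arcs of `A`
in which consecutive arcs share a tail or share a head. -/
def IsZigZag (A : Set (V × V)) (l : List (V × V)) : Prop :=
  l ≠ [] ∧ l.Nodup ∧ (∀ a ∈ l, a ∈ A) ∧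
    l.Chain' (fun a b => a.1 = b.1 ∨ a.2 = b.2)

/-- A maximal zig-zag trail: not properly contained (as an infix, up to reversal)
in any longer zig-zag trail in `A`. -/
def IsMaximalZigZag (A : Set (V × V)) (l : List (V × V)) : Prop :=
  IsZigZag A l ∧
    ∀ l' : List (V × V), IsZigZag A l' → (l <:+: l' ∨ l <:+: l'.reverse) →
      l'.length = l.length

/-- The non-root arcs of `N`. -/
def nonRootArcs (N : Net V) : Set (V × V) := {a ∈ N.arcs | a.1 ≠ N.root}

/-- A zig-zag decomposition: a partition of all non-root arcs of `N` into
(arc sets of) maximal zig-zag trails. -/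
def IsZigZagDecomp (N : Net V) (D : Set (Set (V × V))) : Prop :=
  (∀ B ∈ D, ∃ l : List (V × V),
      IsMaximalZigZag N.nonRootArcs l ∧ {a | a ∈ l} = B) ∧
  (∀ B ∈ D, ∀ B' ∈ D, B ≠ B' → Disjoint B B') ∧
  (∀ B ∈ D, B.Nonempty) ∧
  ⋃₀ D = N.nonRootArcs

/-- A crown: even length at least 4, closing up (first and last arcs share
a tail or share a head). -/
def IsCrown (l : List (V × V)) : Prop :=
  4 ≤ l.length ∧ Even l.length ∧
    ∃ a b : V × V, l.head? = some a ∧ l.getLast? = some b ∧ (a.1 = b.1 ∨ a.2 = b.2)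

/-- An M-fence: even length at least 2, not a crown, both end tails tree vertices. -/
def IsMFence (N : Net V) (l : List (V × V)) : Prop :=
  2 ≤ l.length ∧ Even l.length ∧ ¬ IsCrown l ∧
    ∃ a b : V × V, l.head? = some a ∧ l.getLast? = some b ∧
      N.IsTreeV a.1 ∧ N.IsTreeV b.1

/-- An N-fence: odd length, exactly one of the two end tails is a reticulation. -/
def IsNFence (N : Net V) (l : List (V × V)) : Prop :=
  Odd l.length ∧
    ∃ a b : V × V, l.head? = some a ∧ l.getLast? = some b ∧
      ((N.IsReticV a.1 ∧ ¬ N.IsReticV b.1) ∨ (¬ N.IsReticV a.1 ∧ N.IsReticV b.1))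

/-- A W-fence: even length at least 2, both end tails reticulations. -/
def IsWFence (N : Net V) (l : List (V × V)) : Prop :=
  2 ≤ l.length ∧ Even l.length ∧
    ∃ a b : V × V, l.head? = some a ∧ l.getLast? = some b ∧
      N.IsReticV a.1 ∧ N.IsReticV b.1

end Net
/-!
Along an N-fence `a₀, a₁, …` whose first tail is a reticulation, consecutive arcs alternately
share heads and tails, so every head `head a₂ⱼ₋₁ = head a₂ⱼ₋₂` is a reticulation. In a cherry
cover, the shape through the out-arc of such a reticulation can only be the reticulated cherry
shape containing `a₂ⱼ₋₁` and `a₂ⱼ` (by induction along the fence; any other choice makes three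
arcs meet at one vertex). The endpoint `head a₂ⱼ` of that shape is the reticulation of the next
one, so these shapes form a chain in the auxiliary graph, and a directed path of the network
between internal vertices of two shapes is a path of the auxiliary graph. The two crossing paths
therefore close the chains of the two fences into a cycle.

For the second claim, a cherry or reticulated cherry reduction `N → M` collapses one shape `C`
of `N`: shifting heads along the suppressed vertices maps the arcs of `M` onto those of `N`
outside `C`. A cherry cover of `M` thus lifts to one of `N` by adding `C`, and since `C` is a
sink of the auxiliary graph (its endpoints are leaves), acyclicity lifts as well. Hence an
orchard network, which reduces to a single leaf, has an acyclic cherry cover.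
-/

namespace Net

variable {V : Type*} {N : Net V} {v : V} {a b c : V × V}

theorem eq_of_indeg_eq_one (h : N.indeg v = 1) (ha : a ∈ N.arcs) (hb : b ∈ N.arcs)
    (ha2 : a.2 = v) (hb2 : b.2 = v) : a = b := by
  obtain ⟨d, hd⟩ := Set.ncard_eq_one.mp h
  have had : a ∈ ({d} : Set _) := hd ▸ ⟨ha, ha2⟩
  have hbd : b ∈ ({d} : Set _) := hd ▸ ⟨hb, hb2⟩
  exact had.trans hbd.symm

theorem eq_of_outdeg_eq_one (h : N.outdeg v = 1) (ha : a ∈ N.arcs) (hb : b ∈ N.arcs)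
    (ha1 : a.1 = v) (hb1 : b.1 = v) : a = b := by
  obtain ⟨d, hd⟩ := Set.ncard_eq_one.mp h
  have had : a ∈ ({d} : Set _) := hd ▸ ⟨ha, ha1⟩
  have hbd : b ∈ ({d} : Set _) := hd ▸ ⟨hb, hb1⟩
  exact had.trans hbd.symm

theorem exists_arc_of_outdeg_eq_one (h : N.outdeg v = 1) : ∃ w, (v, w) ∈ N.arcs := by
  obtain ⟨d, hd⟩ := Set.ncard_eq_one.mp h
  have hmem : d ∈ {a ∈ N.arcs | a.1 = v} := hd ▸ rfl
  exact ⟨d.2, hmem.2 ▸ hmem.1⟩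

namespace IsPhylo

variable (hN : N.IsPhylo)
include hN

theorem finite_arcs : N.arcs.Finite := hN.2.1

theorem root_mem : N.root ∈ N.verts := hN.2.2.1

theorem fst_mem_verts (ha : a ∈ N.arcs) : a.1 ∈ N.verts := (hN.2.2.2.1 a ha).1

theorem snd_mem_verts (ha : a ∈ N.arcs) : a.2 ∈ N.verts := (hN.2.2.2.1 a ha).2

theorem indeg_root : N.indeg N.root = 0 := hN.2.2.2.2.1

theorem outdeg_root : N.outdeg N.root = 1 := hN.2.2.2.2.2.1

theorem eq_root_or_of_mem_verts (hv : v ∈ N.verts) :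
    v = N.root ∨ N.IsTreeV v ∨ N.IsReticV v ∨ N.IsLeafV v :=
  hN.2.2.2.2.2.2.1 v hv

theorem not_transGen_self (v : V) : ¬ Relation.TransGen N.arcRel v v := hN.2.2.2.2.2.2.2 v

theorem fst_ne_snd (ha : a ∈ N.arcs) : a.1 ≠ a.2 := by
  intro h
  have hloop : (a.1, a.2) ∈ N.arcs := ha
  rw [h] at hloop
  exact hN.not_transGen_self a.2 (.single hloop)

theorem snd_ne_root (ha : a ∈ N.arcs) : a.2 ≠ N.root := fun h =>
  ((Set.ncard_pos (hN.finite_arcs.sep _)).mpr ⟨a, ha, h⟩).ne' hN.indeg_root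

theorem fst_ne_of_outdeg_eq_zero (h : N.outdeg v = 0) (ha : a ∈ N.arcs) : a.1 ≠ v := fun h1 =>
  ((Set.ncard_pos (hN.finite_arcs.sep _)).mpr
    (⟨a, ha, h1⟩ : {c ∈ N.arcs | c.1 = v}.Nonempty)).ne' h

theorem indeg_le_two (hv : v ∈ N.verts) : N.indeg v ≤ 2 := by
  rcases hN.eq_root_or_of_mem_verts hv with rfl | h | h | h
  · rw [hN.indeg_root]; omega
  all_goals exact h.2.1.trans_le (by norm_num)

theorem outdeg_le_two (hv : v ∈ N.verts) : N.outdeg v ≤ 2 := by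
  rcases hN.eq_root_or_of_mem_verts hv with rfl | h | h | h
  · rw [hN.outdeg_root]; omega
  all_goals exact h.2.2.trans_le (by norm_num)

theorem one_lt_indeg (ha : a ∈ N.arcs) (hb : b ∈ N.arcs) (hab : a ≠ b) (h : a.2 = b.2) :
    1 < N.indeg a.2 :=
  (Set.one_lt_ncard_iff (hN.finite_arcs.sep _)).mpr ⟨a, b, ⟨ha, rfl⟩, ⟨hb, h.symm⟩, hab⟩

theorem one_lt_outdeg (ha : a ∈ N.arcs) (hb : b ∈ N.arcs) (hab : a ≠ b) (h : a.1 = b.1) :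
    1 < N.outdeg a.1 :=
  (Set.one_lt_ncard_iff (hN.finite_arcs.sep _)).mpr ⟨a, b, ⟨ha, rfl⟩, ⟨hb, h.symm⟩, hab⟩

theorem isReticV_of_ne (ha : a ∈ N.arcs) (hb : b ∈ N.arcs) (hab : a ≠ b) (h : a.2 = b.2) :
    N.IsReticV a.2 := by
  have h1 := hN.one_lt_indeg ha hb hab h
  rcases hN.eq_root_or_of_mem_verts (hN.snd_mem_verts ha) with h' | h' | h' | h'
  · exact absurd h' (hN.snd_ne_root ha)
  · have := h'.2.1; omega
  · exact h'
  · have := h'.2.1; omega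

theorem isTreeV_of_ne (ha : a ∈ N.arcs) (hb : b ∈ N.arcs) (hab : a ≠ b) (h : a.1 = b.1) :
    N.IsTreeV a.1 := by
  have h1 := hN.one_lt_outdeg ha hb hab h
  rcases hN.eq_root_or_of_mem_verts (hN.fst_mem_verts ha) with h' | h' | h' | h'
  · rw [h', hN.outdeg_root] at h1; omega
  · exact h'
  · have := h'.2.2; omega
  · have := h'.2.2; omega

theorem eq_or_eq_of_snd_eq (ha : a ∈ N.arcs) (hb : b ∈ N.arcs) (hc : c ∈ N.arcs)
    (hab : a ≠ b) (hb2 : b.2 = a.2) (hc2 : c.2 = a.2) : c = a ∨ c = b := by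
  by_contra! hne
  have h3 : 2 < N.indeg a.2 := (Set.two_lt_ncard_iff (hN.finite_arcs.sep _)).mpr
    ⟨a, b, c, ⟨ha, rfl⟩, ⟨hb, hb2⟩, ⟨hc, hc2⟩, hab, hne.1.symm, hne.2.symm⟩
  exact h3.not_ge (hN.indeg_le_two (hN.snd_mem_verts ha))

theorem eq_or_eq_of_fst_eq (ha : a ∈ N.arcs) (hb : b ∈ N.arcs) (hc : c ∈ N.arcs)
    (hab : a ≠ b) (hb1 : b.1 = a.1) (hc1 : c.1 = a.1) : c = a ∨ c = b := by
  by_contra! hne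
  have h3 : 2 < N.outdeg a.1 := (Set.two_lt_ncard_iff (hN.finite_arcs.sep _)).mpr
    ⟨a, b, c, ⟨ha, rfl⟩, ⟨hb, hb1⟩, ⟨hc, hc1⟩, hab, hne.1.symm, hne.2.symm⟩
  exact h3.not_ge (hN.outdeg_le_two (hN.fst_mem_verts ha))

end IsPhylo

end Net

namespace Shape

variable {V : Type*} {S : Shape V} {a : V × V} {w : V}

theorem fst_mem_internals (ha : a ∈ S.shapeArcs) : a.1 ∈ S.internals := by
  cases S <;> rcases ha with rfl | rfl | rfl <;> simp [internals]

theorem snd_mem_endpoints_or_internals (ha : a ∈ S.shapeArcs) :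
    a.2 ∈ S.endpoints ∨ a.2 ∈ S.internals := by
  cases S <;> rcases ha with rfl | rfl | rfl <;> simp [endpoints, internals]

theorem exists_arc_of_mem_internals (hw : w ∈ S.internals) : ∃ a ∈ S.shapeArcs, a.1 = w := by
  cases S with
  | cherry p x y => exact ⟨(p, x), by simp [shapeArcs], hw.symm⟩
  | retic px py x y =>
    rcases hw with rfl | rfl
    · exact ⟨(w, x), by simp [shapeArcs], rfl⟩
    · exact ⟨(w, px), by simp [shapeArcs], rfl⟩

end Shape

namespace Net.IsCherryCover

variable {V : Type*} {N : Net V} {P : Set (Shape V)} {S S' : Shape V} {a : V × V} {v w : V}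

theorem eq_of_mem_shapeArcs (hP : N.IsCherryCover P) (hS : S ∈ P) (hS' : S' ∈ P)
    (ha : a ∈ S.shapeArcs) (ha' : a ∈ S'.shapeArcs) : S = S' :=
  (hP.2.1 a ((hP.1 S hS).1 ha) (hP.2.2 S hS a ha)).unique ⟨hS, ha⟩ ⟨hS', ha'⟩

theorem mem_shapeArcs_of_fst_mem_internals (hN : N.IsPhylo) (hP : N.IsCherryCover P)
    (hS : S ∈ P) (hw : w ∈ S.internals) (ha : a ∈ N.arcs) (h1 : a.1 = w) :
    a ∈ S.shapeArcs := by
  obtain ⟨hsub, hval⟩ := hP.1 S hS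
  cases S with
  | cherry p x y =>
    obtain rfl : w = p := hw
    rcases hN.eq_or_eq_of_fst_eq (a := (w, x)) (b := (w, y)) (hsub (by simp [Shape.shapeArcs]))
      (hsub (by simp [Shape.shapeArcs])) ha (by simpa [Shape.IsValid] using hval) rfl h1
      with rfl | rfl <;> simp [Shape.shapeArcs]
  | retic px py x y =>
    rcases hw with rfl | rfl
    · obtain rfl := eq_of_outdeg_eq_one (b := (w, x)) hval.1.2.2 ha
        (hsub (by simp [Shape.shapeArcs])) h1 rfl
      simp [Shape.shapeArcs]
    · rcases hN.eq_or_eq_of_fst_eq (a := (w, px)) (b := (w, y))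
        (hsub (by simp [Shape.shapeArcs])) (hsub (by simp [Shape.shapeArcs])) ha
        (by simpa using hval.2.2.1) rfl h1 with rfl | rfl <;> simp [Shape.shapeArcs]

theorem eq_of_mem_internals (hN : N.IsPhylo) (hP : N.IsCherryCover P) (hS : S ∈ P)
    (hS' : S' ∈ P) (hw : w ∈ S.internals) (hw' : w ∈ S'.internals) : S = S' := by
  obtain ⟨a, ha, rfl⟩ := Shape.exists_arc_of_mem_internals hw
  exact hP.eq_of_mem_shapeArcs hS hS' ha
    (hP.mem_shapeArcs_of_fst_mem_internals hN hS' hw' ((hP.1 S hS).1 ha) rfl)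

/-- Each arc of the path lies in the shape of its tail, and its head is an endpoint or an
internal vertex of that shape. -/
theorem reflTransGen_auxRel (hN : N.IsPhylo) (hP : N.IsCherryCover P) {u : V}
    (hpath : Relation.ReflTransGen N.arcRel u w) (hS : S ∈ P) (hu : u ∈ S.internals)
    (hS' : S' ∈ P) (hw : w ∈ S'.internals) : Relation.ReflTransGen (AuxRel P) S S' := by
  induction hpath generalizing S' with
  | refl => rw [hP.eq_of_mem_internals hN hS hS' hu hw]
  | @tail v w hpath harc ih =>
    have hv : v ≠ N.root := by
      rcases hpath.cases_tail with rfl | ⟨_, -, h⟩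
      · obtain ⟨a, ha, rfl⟩ := Shape.exists_arc_of_mem_internals hu
        exact hP.2.2 S hS a ha
      · exact hN.snd_ne_root h
    obtain ⟨T, ⟨hT, hvw⟩, -⟩ := hP.2.1 (v, w) harc hv
    rcases Shape.snd_mem_endpoints_or_internals hvw with hend | hint
    · exact (ih hT (Shape.fst_mem_internals hvw)).tail ⟨hT, hS', w, hw, hend⟩
    · rw [← hP.eq_of_mem_internals hN hT hS' hint hw]
      exact ih hT (Shape.fst_mem_internals hvw)

theorem exists_retic_mem_of_isReticV (hN : N.IsPhylo) (hP : N.IsCherryCover P)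
    (hv : N.IsReticV v) : ∃ py x y, Shape.retic v py x y ∈ P := by
  obtain ⟨c, hc⟩ := exists_arc_of_outdeg_eq_one hv.2.2
  have hroot : v ≠ N.root := fun h => by
    have := hv.2.1
    rw [h, hN.indeg_root] at this
    omega
  obtain ⟨T, ⟨hT, hcT⟩, -⟩ := hP.2.1 (v, c) hc hroot
  obtain ⟨hsub, hval⟩ := hP.1 T hT
  cases T with
  | cherry p x y =>
    obtain rfl : v = p := Shape.fst_mem_internals hcT
    exact absurd (eq_of_outdeg_eq_one (a := (v, x)) (b := (v, y)) hv.2.2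
      (hsub (by simp [Shape.shapeArcs])) (hsub (by simp [Shape.shapeArcs])) rfl rfl)
      (by simpa [Shape.IsValid] using hval)
  | retic px py x y =>
    simp only [Shape.shapeArcs, Set.mem_insert_iff, Set.mem_singleton_iff, Prod.mk.injEq] at hcT
    rcases hcT with ⟨rfl, rfl⟩ | ⟨rfl, rfl⟩ | ⟨rfl, rfl⟩
    · exact ⟨py, c, y, hT⟩
    · exact absurd (eq_of_outdeg_eq_one (a := (v, c)) (b := (v, y)) hv.2.2
        (hsub (by simp [Shape.shapeArcs])) (hsub (by simp [Shape.shapeArcs])) rfl rfl)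
        (by simpa using hval.2.2.1)
    · exact absurd (eq_of_outdeg_eq_one (a := (v, px)) (b := (v, c)) hv.2.2
        (hsub (by simp [Shape.shapeArcs])) (hsub (by simp [Shape.shapeArcs])) rfl rfl)
        (by simpa using hval.2.2.1)

end Net.IsCherryCover

namespace Net.IsZigZag

variable {V : Type*} {A : Set (V × V)} {N : Net V} {P : Set (Shape V)} {l : List (V × V)}
  {m o : ℕ}

theorem getElem_mem (hl : IsZigZag A l) (hm : m < l.length) : l[m] ∈ A :=
  hl.2.2.1 _ (List.getElem_mem hm)

theorem getElem_ne (hl : IsZigZag A l) {m' : ℕ} (hm : m < l.length) (hm' : m' < l.length)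
    (h : m ≠ m') : l[m] ≠ l[m'] :=
  fun heq => h (hl.2.1.getElem_inj_iff.mp heq)

theorem fst_eq_or_snd_eq (hl : IsZigZag A l) (hm : m + 1 < l.length) :
    l[m].1 = l[m + 1].1 ∨ l[m].2 = l[m + 1].2 :=
  List.isChain_iff_getElem.mp hl.2.2.2 m hm

section Fence

variable (hN : N.IsPhylo) (hl : IsZigZag N.nonRootArcs l) (hr : ∀ a ∈ l.head?, N.IsReticV a.1)
include hN hl hr

/-- Otherwise three arcs of the trail would meet at one vertex, or the reticulation `l[0].1`
would have two out-arcs. -/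
theorem alternates (m : ℕ) (hm : m + 1 < l.length) :
    (Even m → l[m].2 = l[m + 1].2) ∧ (Odd m → l[m].1 = l[m + 1].1) := by
  have arc : ∀ n (hn : n < l.length), l[n] ∈ N.arcs := fun n hn => (hl.getElem_mem hn).1
  induction m with
  | zero =>
    refine ⟨fun _ => (hl.fst_eq_or_snd_eq hm).resolve_left fun htail => ?_, by simp⟩
    have hr0 : N.IsReticV l[0].1 := hr _ (by simp [List.head?_eq_getElem?])
    exact hl.getElem_ne _ _ zero_ne_one
      (eq_of_outdeg_eq_one hr0.2.2 (arc 0 (by omega)) (arc 1 hm) rfl htail.symm)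
  | succ m ih =>
    obtain ⟨ih_even, ih_odd⟩ := ih (by omega)
    refine ⟨fun he => (hl.fst_eq_or_snd_eq hm).resolve_left fun htail => ?_,
      fun ho => (hl.fst_eq_or_snd_eq hm).resolve_right fun hhead => ?_⟩
    · have htail' := ih_odd (by simpa [Nat.even_add_one] using he)
      rcases hN.eq_or_eq_of_fst_eq (arc m (by omega)) (arc (m + 1) (by omega)) (arc (m + 2) hm)
        (hl.getElem_ne _ _ (by omega)) htail'.symm (htail'.trans htail).symm with h | h
      all_goals exact hl.getElem_ne _ _ (by omega) h
    · have hhead' := ih_even (by simpa [Nat.odd_add_one] using ho)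
      rcases hN.eq_or_eq_of_snd_eq (arc m (by omega)) (arc (m + 1) (by omega)) (arc (m + 2) hm)
        (hl.getElem_ne _ _ (by omega)) hhead'.symm (hhead'.trans hhead).symm with h | h
      all_goals exact hl.getElem_ne _ _ (by omega) h

theorem snd_eq_snd_succ (he : Even m) (hm : m + 1 < l.length) : l[m].2 = l[m + 1].2 :=
  (hl.alternates hN hr m hm).1 he

theorem fst_eq_fst_succ (ho : Odd m) (hm : m + 1 < l.length) : l[m].1 = l[m + 1].1 :=
  (hl.alternates hN hr m hm).2 ho

variable (hP : N.IsCherryCover P)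
include hP

/-- The common head `v` of `l[m]` and `l[m+1]` is a reticulation, and the shape through its
out-arc is a reticulated cherry shape `retic v py c y` with `(py, v)` equal to `l[m]` or
`l[m+1]`; `hprev` rules out the first case. -/
theorem retic_mem_of_even (he : Even m) (hm : m + 2 < l.length)
    (hprev : ∀ py c y, (py, l[m + 1].2) = l[m] → Shape.retic l[m + 1].2 py c y ∉ P) :
    ∃ c, Shape.retic l[m + 1].2 l[m + 1].1 c l[m + 2].2 ∈ P := by
  have arc : ∀ n (hn : n < l.length), l[n] ∈ N.arcs := fun n hn => (hl.getElem_mem hn).1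
  have hhead := hl.snd_eq_snd_succ hN hr he (by omega)
  have hne := hl.getElem_ne (m := m) (m' := m + 1) (by omega) (by omega) (by omega)
  obtain ⟨py, c, y, hS⟩ := hP.exists_retic_mem_of_isReticV hN
    (hhead ▸ hN.isReticV_of_ne (arc m (by omega)) (arc (m + 1) (by omega)) hne hhead)
  obtain ⟨hsub, hval⟩ := hP.1 _ hS
  have hpy : (py, l[m + 1].2) ∈ N.arcs := hsub (by simp [Shape.shapeArcs])
  have hy : (py, y) ∈ N.arcs := hsub (by simp [Shape.shapeArcs])
  rcases hN.eq_or_eq_of_snd_eq (arc m (by omega)) (arc (m + 1) (by omega)) hpy hne hhead.symm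
    hhead.symm with h | h
  · exact absurd hS (hprev py c y h)
  have htail := hl.fst_eq_fst_succ hN hr he.add_one (by omega)
  have hpy1 : py = l[m + 1].1 := by rw [← h]
  rcases hN.eq_or_eq_of_fst_eq (arc (m + 1) (by omega)) (arc (m + 2) hm) hy
    (hl.getElem_ne _ _ (by omega)) htail.symm hpy1 with h' | h'
  · exact absurd (congrArg Prod.snd (h'.trans h.symm)) (by simpa using hval.2.2.1.symm)
  · have hy2 : l[m + 2].2 = y := by rw [← h']
    exact ⟨c, by rw [← hpy1, hy2]; exact hS⟩

/-- Such a shape would also contain `l[m]`, hence be the shape of `l[m]`, and then the head of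
`l[m + 1]` would have the three in-arcs `l[m]`, `l[m + 1]`, `l[m + 2]`. -/
theorem retic_not_mem (ho : Odd m) (hm : m + 2 < l.length) {py c y c' : V}
    (hprev : Shape.retic l[m].2 l[m].1 c' l[m + 1].2 ∈ P) (hpy : (py, l[m + 2].2) = l[m + 1]) :
    Shape.retic l[m + 2].2 py c y ∉ P := by
  intro hS
  have arc : ∀ n (hn : n < l.length), l[n] ∈ N.arcs := fun n hn => (hl.getElem_mem hn).1
  have hy : (py, y) ∈ N.arcs := (hP.1 _ hS).1 (by simp [Shape.shapeArcs])
  have htail := hl.fst_eq_fst_succ hN hr ho (by omega)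
  have hpy1 : py = l[m + 1].1 := by rw [← hpy]
  rcases hN.eq_or_eq_of_fst_eq (arc m (by omega)) (arc (m + 1) (by omega)) hy
    (hl.getElem_ne _ _ (by omega)) htail.symm (hpy1.trans htail.symm) with h | h
  · have hshape := hP.eq_of_mem_shapeArcs hS hprev (a := l[m])
      (by rw [← h]; simp [Shape.shapeArcs]) (by simp [Shape.shapeArcs])
    have hv : l[m].2 = l[m + 2].2 := by injection hshape with h1; exact h1.symm
    have hv' : l[m + 1].2 = l[m + 2].2 := by rw [← hpy]
    rcases hN.eq_or_eq_of_snd_eq (arc (m + 1) (by omega)) (arc (m + 2) hm) (arc m (by omega))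
      (hl.getElem_ne _ _ (by omega)) hv'.symm (hv.trans hv'.symm) with h' | h'
    all_goals exact hl.getElem_ne _ _ (by omega) h'
  · exact (hP.1 _ hS).2.2.2.1 (congrArg Prod.snd (hpy.trans h.symm))

/-- In the paper's 1-based indexing, this says that `a₂ⱼ` and `a₂ⱼ₊₁` lie in one reticulated
cherry shape. -/
theorem retic_mem_of_odd (ho : Odd o) (h : o + 1 < l.length) :
    ∃ c, Shape.retic l[o].2 l[o].1 c l[o + 1].2 ∈ P := by
  induction o using Nat.strong_induction_on with
  | _ o ih =>
    obtain ⟨m, rfl⟩ : ∃ m, o = m + 1 := ⟨o - 1, by have := ho.pos; omega⟩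
    have he : Even m := by simpa [Nat.odd_add_one] using ho
    refine hl.retic_mem_of_even hN hr hP he h fun py c y hpy hS => ?_
    rcases m with _ | m
    · have hr0 : N.IsReticV l[0].1 := hr _ (by simp [List.head?_eq_getElem?])
      have hpy1 : py = l[0].1 := by rw [← hpy]
      obtain ⟨hsub, hval⟩ := hP.1 _ hS
      have hout : ((py, l[0 + 1].2) : V × V) = (py, y) := eq_of_outdeg_eq_one (hpy1 ▸ hr0).2.2
        (hsub (by simp [Shape.shapeArcs])) (hsub (by simp [Shape.shapeArcs])) rfl rfl
      exact hval.2.2.1 (congrArg Prod.snd hout)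
    · have hm : Odd m := by simpa [Nat.even_add_one] using he
      obtain ⟨c', hprev⟩ := ih m (by omega) hm (by omega)
      exact hl.retic_not_mem hN hr hP hm (by omega) hprev hpy hS

theorem eq_retic_of_mem (ho : Odd o) (h : o + 1 < l.length) {B : Shape V} (hB : B ∈ P)
    (hoB : l[o] ∈ B.shapeArcs) : ∃ c, B = Shape.retic l[o].2 l[o].1 c l[o + 1].2 := by
  obtain ⟨c, hS⟩ := hl.retic_mem_of_odd hN hr hP ho h
  exact ⟨c, hP.eq_of_mem_shapeArcs hB hS hoB (by simp [Shape.shapeArcs])⟩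

theorem auxRel_of_odd (ho : Odd o) (h : o + 3 < l.length) {B B' : Shape V} (hB : B ∈ P)
    (hB' : B' ∈ P) (hoB : l[o] ∈ B.shapeArcs) (hoB' : l[o + 2] ∈ B'.shapeArcs) :
    AuxRel P B B' := by
  obtain ⟨c, rfl⟩ := hl.eq_retic_of_mem hN hr hP ho (by omega) hB hoB
  obtain ⟨c', rfl⟩ := hl.eq_retic_of_mem hN hr hP (ho.add_even even_two) (by omega) hB' hoB'
  refine ⟨hB, hB', l[o + 2].2, by simp [Shape.internals], ?_⟩
  rw [← hl.snd_eq_snd_succ hN hr ho.add_one (by omega)]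
  simp [Shape.endpoints]

theorem transGen_auxRel {o' : ℕ} (ho : Odd o) (ho' : Odd o') (hlt : o < o')
    (h : o' + 1 < l.length) {B B' : Shape V} (hB : B ∈ P) (hB' : B' ∈ P)
    (hoB : l[o] ∈ B.shapeArcs) (hoB' : l[o'] ∈ B'.shapeArcs) :
    Relation.TransGen (AuxRel P) B B' := by
  induction o' using Nat.strong_induction_on generalizing B' with
  | _ o' ih =>
    obtain ⟨s, hs⟩ := ho
    obtain ⟨t, ht⟩ := ho'
    obtain ⟨o'', rfl⟩ : ∃ o'', o' = o'' + 2 := ⟨o' - 2, by omega⟩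
    have ho'' : Odd o'' := ⟨t - 1, by omega⟩
    obtain ⟨c, hB''⟩ := hl.retic_mem_of_odd hN hr hP ho'' (by omega)
    have hedge := hl.auxRel_of_odd hN hr hP ho'' (by omega) hB'' hB'
      (by simp [Shape.shapeArcs]) hoB'
    rcases eq_or_lt_of_le (show o ≤ o'' by omega) with rfl | hlt'
    · rw [hP.eq_of_mem_shapeArcs hB hB'' hoB (by simp [Shape.shapeArcs])]
      exact .single hedge
    · exact (ih o'' (by omega) ho'' hlt' (by omega) hB'' hoB (by simp [Shape.shapeArcs])).tail
        hedge

end Fence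

end Net.IsZigZag

namespace Net

theorem exists_transGen_auxRel_self_of_crossing {V : Type*} {N : Net V} {P : Set (Shape V)}
    (hN : N.IsPhylo) (hP : N.IsCherryCover P) {lu lv : List (V × V)}
    (hu : IsZigZag N.nonRootArcs lu) (hv : IsZigZag N.nonRootArcs lv)
    (hru : ∀ a ∈ lu.head?, N.IsReticV a.1) (hrv : ∀ a ∈ lv.head?, N.IsReticV a.1)
    {ou ou' ov ov' : ℕ} (hou : Odd ou) (hou' : Odd ou') (hov : Odd ov) (hov' : Odd ov')
    (hltu : ou' < ou) (hltv : ov < ov') (hlu : ou + 1 < lu.length) (hlv : ov' + 1 < lv.length)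
    (hpath : Relation.ReflTransGen N.arcRel lu[ou].2 lv[ov].1)
    (hpath' : Relation.ReflTransGen N.arcRel lv[ov'].2 lu[ou'].1) :
    ∃ B, Relation.TransGen (AuxRel P) B B := by
  obtain ⟨_, hBu⟩ := hu.retic_mem_of_odd hN hru hP hou hlu
  obtain ⟨_, hBu'⟩ := hu.retic_mem_of_odd hN hru hP hou' (by omega)
  obtain ⟨_, hBv⟩ := hv.retic_mem_of_odd hN hrv hP hov (by omega)
  obtain ⟨_, hBv'⟩ := hv.retic_mem_of_odd hN hrv hP hov' hlv
  have huv := hP.reflTransGen_auxRel hN hpath hBu (by simp [Shape.internals]) hBv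
    (by simp [Shape.internals])
  have hvv := hv.transGen_auxRel hN hrv hP hov hov' hltv hlv hBv hBv'
    (by simp [Shape.shapeArcs]) (by simp [Shape.shapeArcs])
  have hvu := hP.reflTransGen_auxRel hN hpath' hBv' (by simp [Shape.internals]) hBu'
    (by simp [Shape.internals])
  have huu := hu.transGen_auxRel hN hru hP hou' hou hltu hlu hBu' hBu
    (by simp [Shape.shapeArcs]) (by simp [Shape.shapeArcs])
  exact ⟨_, ((Relation.TransGen.trans_right huv hvv).trans_left hvu).trans huu⟩

end Net

theorem Relation.TransGen.lift_of_sink {α β : Type*} {r : α → α → Prop} {r' : β → β → Prop}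
    {c : α} (φ : α → β) (hsink : ∀ b, ¬ r c b) (hmap : ∀ a b, r a b → b ≠ c → r' (φ a) (φ b))
    {a b : α} (h : Relation.TransGen r a b) (hb : b ≠ c) : Relation.TransGen r' (φ a) (φ b) := by
  induction h with
  | single hab => exact .single (hmap _ _ hab hb)
  | tail _ hbc ih =>
    exact (ih fun h => hsink _ (h ▸ hbc)).tail (hmap _ _ hbc hb)

theorem Set.image_sdiff_union_eq_sdiff {α : Type*} {f : α → α} {s K R A : Set α}
    (hfix : ∀ b ∈ s \ (K ∪ R), f b = b) (hA : f '' A = R) (hR : R ⊆ s \ K) :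
    f '' ((s \ (K ∪ R)) ∪ A) = s \ K := by
  rw [Set.image_union, hA, Set.EqOn.image_eq_self hfix, ← Set.sdiff_sdiff,
    Set.sdiff_union_of_subset hR]

namespace Shape

variable {V : Type*}

def mapEndpoints (σ : V → V) : Shape V → Shape V
  | .cherry p x y => .cherry p (σ x) (σ y)
  | .retic px py x y => .retic px py (σ x) (σ y)

@[simp]
theorem internals_mapEndpoints (σ : V → V) (S : Shape V) :
    (S.mapEndpoints σ).internals = S.internals := by
  cases S <;> rfl

@[simp]
theorem endpoints_mapEndpoints (σ : V → V) (S : Shape V) :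
    (S.mapEndpoints σ).endpoints = σ '' S.endpoints := by
  cases S <;> simp [mapEndpoints, endpoints, Set.image_insert_eq]

theorem shapeArcs_mapEndpoints {σ : V → V} {S : Shape V} (h : ∀ v ∈ S.internals, σ v = v) :
    (S.mapEndpoints σ).shapeArcs = Prod.map id σ '' S.shapeArcs := by
  cases S with
  | cherry p x y => simp [mapEndpoints, shapeArcs, Set.image_insert_eq]
  | retic px py x y =>
    simp [mapEndpoints, shapeArcs, Set.image_insert_eq, h px (by simp [internals])]

end Shape

namespace Net

variable {V : Type*}

section ImageArcs

variable {N M : Net V} {C : Shape V} {σ : V → V}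

theorem outdeg_eq_of_image_arcs (hσ : σ.Injective)
    (himage : Prod.map id σ '' M.arcs = N.arcs \ C.shapeArcs) {v : V} (hv : v ∉ C.internals) :
    M.outdeg v = N.outdeg v := by
  have : {b ∈ N.arcs | b.1 = v} = Prod.map id σ '' {a ∈ M.arcs | a.1 = v} := by
    ext b
    constructor
    · rintro ⟨hb, rfl⟩
      obtain ⟨a, ha, rfl⟩ : b ∈ Prod.map id σ '' M.arcs :=
        himage ▸ ⟨hb, fun hbC => hv (Shape.fst_mem_internals hbC)⟩
      exact ⟨a, ⟨ha, rfl⟩, rfl⟩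
    · rintro ⟨a, ⟨ha, rfl⟩, rfl⟩
      exact ⟨(himage ▸ Set.mem_image_of_mem _ ha : _ ∈ N.arcs \ C.shapeArcs).1, rfl⟩
  rw [outdeg, outdeg, this, Set.ncard_image_of_injective _ (Function.injective_id.prodMap hσ)]

theorem indeg_eq_ncard_of_image_arcs (hσ : σ.Injective)
    (himage : Prod.map id σ '' M.arcs = N.arcs \ C.shapeArcs) (v : V) :
    M.indeg v = {b ∈ N.arcs \ C.shapeArcs | b.2 = σ v}.ncard := by
  have : {b ∈ N.arcs \ C.shapeArcs | b.2 = σ v} = Prod.map id σ '' {a ∈ M.arcs | a.2 = v} := by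
    ext b
    constructor
    · rintro ⟨hb, hbv⟩
      obtain ⟨a, ha, rfl⟩ : b ∈ Prod.map id σ '' M.arcs := himage ▸ hb
      exact ⟨a, ⟨ha, hσ hbv⟩, rfl⟩
    · rintro ⟨a, ⟨ha, rfl⟩, rfl⟩
      exact ⟨himage ▸ Set.mem_image_of_mem _ ha, rfl⟩
  rw [indeg, this, Set.ncard_image_of_injective _ (Function.injective_id.prodMap hσ)]

theorem indeg_eq_of_image_arcs (hσ : σ.Injective)
    (himage : Prod.map id σ '' M.arcs = N.arcs \ C.shapeArcs) {v : V} (hv : σ v = v)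
    (hC : ∀ a ∈ C.shapeArcs, a.2 ≠ v) : M.indeg v = N.indeg v := by
  rw [indeg_eq_ncard_of_image_arcs hσ himage, hv]
  congr 1
  ext b
  exact ⟨fun hb => ⟨hb.1.1, hb.2⟩, fun hb => ⟨⟨hb.1, fun hbC => hC b hbC hb.2⟩, hb.2⟩⟩

theorem indeg_eq_one_of_image_arcs (hσ : σ.Injective)
    (himage : Prod.map id σ '' M.arcs = N.arcs \ C.shapeArcs) {v : V} {b : V × V}
    (hb : b ∈ N.arcs \ C.shapeArcs) (hbv : b.2 = σ v)
    (huniq : ∀ a ∈ N.arcs, a.2 = σ v → a ∉ C.shapeArcs → a = b) : M.indeg v = 1 := by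
  rw [indeg_eq_ncard_of_image_arcs hσ himage, Set.ncard_eq_one]
  exact ⟨b, Set.eq_singleton_iff_unique_mem.mpr
    ⟨⟨hb, hbv⟩, fun a ha => huniq a ha.1.1 ha.2 ha.1.2⟩⟩

end ImageArcs

/-- `M` arises from `N` by collapsing the shape `C` of `N`: `σ` sends each endpoint of `C` that
survives in `M` to its parent in `C`, so that shifting heads along `σ` maps the arcs of `M`
bijectively onto the arcs of `N` outside `C`. -/
structure IsCollapse (N M : Net V) (C : Shape V) (σ : V → V) : Prop where
  root_eq : M.root = N.root
  injective : σ.Injective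
  image_arcs : Prod.map id σ '' M.arcs = N.arcs \ C.shapeArcs
  fixes_tails : ∀ a ∈ M.arcs, σ a.1 = a.1
  shapeArcs_subset : C.shapeArcs ⊆ N.arcs
  isValid : C.IsValid N
  fst_ne_root : ∀ a ∈ C.shapeArcs, a.1 ≠ N.root
  endpoint_not_tail : ∀ e ∈ C.endpoints, ∀ a ∈ N.arcs, a.1 ≠ e
  verts_subset : M.verts ⊆ N.verts
  root_mem : M.root ∈ M.verts
  mem_verts : ∀ a ∈ M.arcs, a.1 ∈ M.verts ∧ a.2 ∈ M.verts
  indeg_eq : ∀ v ∈ M.verts, M.indeg v = N.indeg v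
  outdeg_eq : ∀ v ∈ M.verts, M.outdeg v = N.outdeg v
  transGen : ∀ a ∈ M.arcs, Relation.TransGen N.arcRel a.1 a.2

namespace IsCollapse

variable {N M : Net V} {C : Shape V} {σ : V → V}

theorem isPhylo (hN : N.IsPhylo) (hE : IsCollapse N M C σ) : M.IsPhylo := by
  refine ⟨hN.1.subset hE.verts_subset, ?_, hE.root_mem, hE.mem_verts, ?_, ?_, fun v hv => ?_,
    fun v hv => hN.not_transGen_self v (hv.lift' id fun u w h => hE.transGen (u, w) h)⟩
  · refine Set.Finite.of_finite_image ?_ (Function.injective_id.prodMap hE.injective).injOn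
    rw [hE.image_arcs]
    exact hN.finite_arcs.sdiff
  · rw [hE.indeg_eq _ hE.root_mem, hE.root_eq, hN.indeg_root]
  · rw [hE.outdeg_eq _ hE.root_mem, hE.root_eq, hN.outdeg_root]
  · have hin := hE.indeg_eq v hv
    have hout := hE.outdeg_eq v hv
    rcases hN.eq_root_or_of_mem_verts (hE.verts_subset hv) with h | h | h | h
    · exact .inl (h.trans hE.root_eq.symm)
    · exact .inr (.inl ⟨hv, hin.trans h.2.1, hout.trans h.2.2⟩)
    · exact .inr (.inr (.inl ⟨hv, hin.trans h.2.1, hout.trans h.2.2⟩))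
    · exact .inr (.inr (.inr ⟨hv, hin.trans h.2.1, hout.trans h.2.2⟩))

theorem isReticV (hE : IsCollapse N M C σ) {v : V} (hv : M.IsReticV v) : N.IsReticV v :=
  ⟨hE.verts_subset hv.1, (hE.indeg_eq v hv.1).symm.trans hv.2.1,
    (hE.outdeg_eq v hv.1).symm.trans hv.2.2⟩

variable (hE : IsCollapse N M C σ) {P' : Set (Shape V)} (hP' : M.IsCherryCover P')
include hE hP'

theorem apply_eq_self_of_mem_internals {S : Shape V} (hS : S ∈ P') {v : V}
    (hv : v ∈ S.internals) : σ v = v := by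
  obtain ⟨a, ha, rfl⟩ := Shape.exists_arc_of_mem_internals hv
  exact hE.fixes_tails a ((hP'.1 S hS).1 ha)

theorem shapeArcs_mapEndpoints {S : Shape V} (hS : S ∈ P') :
    (S.mapEndpoints σ).shapeArcs = Prod.map id σ '' S.shapeArcs :=
  Shape.shapeArcs_mapEndpoints fun _ => hE.apply_eq_self_of_mem_internals hP' hS

theorem shapeArcs_mapEndpoints_subset {S : Shape V} (hS : S ∈ P') :
    (S.mapEndpoints σ).shapeArcs ⊆ N.arcs \ C.shapeArcs := by
  rw [hE.shapeArcs_mapEndpoints hP' hS, ← hE.image_arcs]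
  exact Set.image_mono (hP'.1 S hS).1

theorem isValid_mapEndpoints {S : Shape V} (hS : S ∈ P') : (S.mapEndpoints σ).IsValid N := by
  have hval := (hP'.1 S hS).2
  cases S with
  | cherry p x y => exact hE.injective.ne hval
  | retic px py x y =>
    refine ⟨hE.isReticV hval.1, hval.2.1, ?_, hE.injective.ne hval.2.2.2⟩
    rw [← hE.apply_eq_self_of_mem_internals hP' hS (v := px) (by simp [Shape.internals])]
    exact hE.injective.ne hval.2.2.1

theorem isCherryCover : N.IsCherryCover (insert C (Shape.mapEndpoints σ '' P')) := by
  have hf : (Prod.map (id : V → V) σ).Injective := Function.injective_id.prodMap hE.injective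
  refine ⟨?_, fun a ha hroot => ?_, ?_⟩
  · rintro _ (rfl | ⟨S, hS, rfl⟩)
    · exact ⟨hE.shapeArcs_subset, hE.isValid⟩
    · exact ⟨(hE.shapeArcs_mapEndpoints_subset hP' hS).trans Set.sdiff_subset,
        hE.isValid_mapEndpoints hP' hS⟩
  · by_cases haC : a ∈ C.shapeArcs
    · refine ⟨C, ⟨Set.mem_insert _ _, haC⟩, ?_⟩
      rintro _ ⟨rfl | ⟨S, hS, rfl⟩, haT⟩
      · rfl
      · exact absurd haC (hE.shapeArcs_mapEndpoints_subset hP' hS haT).2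
    obtain ⟨b, hb, rfl⟩ : a ∈ Prod.map id σ '' M.arcs := hE.image_arcs ▸ ⟨ha, haC⟩
    obtain ⟨S, ⟨hS, hbS⟩, hSuniq⟩ := hP'.2.1 b hb (hE.root_eq ▸ hroot)
    refine ⟨S.mapEndpoints σ, ⟨.inr ⟨S, hS, rfl⟩,
      hE.shapeArcs_mapEndpoints hP' hS ▸ Set.mem_image_of_mem _ hbS⟩, ?_⟩
    rintro _ ⟨rfl | ⟨S', hS', rfl⟩, haT⟩
    · exact absurd haT haC
    · rw [hE.shapeArcs_mapEndpoints hP' hS'] at haT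
      obtain ⟨b', hb'S', hbb'⟩ := haT
      rw [hSuniq S' ⟨hS', hf hbb' ▸ hb'S'⟩]
  · rintro _ (rfl | ⟨S, hS, rfl⟩) a ha
    · exact hE.fst_ne_root a ha
    · rw [hE.shapeArcs_mapEndpoints hP' hS] at ha
      obtain ⟨b, hb, rfl⟩ := ha
      exact hE.root_eq ▸ hP'.2.2 S hS b hb

theorem auxAcyclic (hacyc : AuxAcyclic P') :
    AuxAcyclic (insert C (Shape.mapEndpoints σ '' P')) := by
  have hsink : ∀ B, ¬ AuxRel (insert C (Shape.mapEndpoints σ '' P')) C B := by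
    rintro B ⟨-, hB, w, hw, hwC⟩
    obtain ⟨a, ha, rfl⟩ := Shape.exists_arc_of_mem_internals hw
    exact hE.endpoint_not_tail _ hwC a (((hE.isCherryCover hP').1 B hB).1 ha) rfl
  have hmap : ∀ S₁ ∈ P', ∀ S₂ ∈ P',
      AuxRel (insert C (Shape.mapEndpoints σ '' P')) (S₁.mapEndpoints σ) (S₂.mapEndpoints σ) →
        AuxRel P' S₁ S₂ := by
    rintro S₁ hS₁ S₂ hS₂ ⟨-, -, w, hw, hwe⟩
    rw [Shape.internals_mapEndpoints] at hw
    rw [Shape.endpoints_mapEndpoints] at hwe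
    obtain ⟨e, he, hew⟩ := hwe
    have hσw := hE.apply_eq_self_of_mem_internals hP' hS₂ hw
    exact ⟨hS₁, hS₂, w, hw, hE.injective (hew.trans hσw.symm) ▸ he⟩
  have : Nonempty (Shape V) := ⟨C⟩
  intro B hB
  have hBC : B ≠ C := fun h => by
    obtain ⟨_, hBB', -⟩ := Relation.TransGen.head'_iff.mp hB
    exact hsink _ (h ▸ hBB')
  refine hacyc _ (hB.lift_of_sink (Function.invFunOn (Shape.mapEndpoints σ) P') hsink
    (fun B₁ B₂ h hB₂ => ?_) hBC)
  have hmem : ∀ {B}, B ∈ insert C (Shape.mapEndpoints σ '' P') → B ≠ C →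
      Function.invFunOn (Shape.mapEndpoints σ) P' B ∈ P' ∧
        (Function.invFunOn (Shape.mapEndpoints σ) P' B).mapEndpoints σ = B :=
    fun hB hBC => ⟨Function.invFunOn_mem (hB.resolve_left hBC),
      Function.invFunOn_eq (hB.resolve_left hBC)⟩
  obtain ⟨h₁, e₁⟩ := hmem h.1 fun h' => hsink _ (h' ▸ h)
  obtain ⟨h₂, e₂⟩ := hmem h.2.1 hB₂
  rw [← e₁, ← e₂] at h
  exact hmap _ h₁ _ h₂ h

end IsCollapse

section CherryRed

/-- `N.CherryRed M` is `∃ x y p gp, IsCherryRedAt N M x y p gp`. -/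
def IsCherryRedAt (N M : Net V) (x y p gp : V) : Prop :=
  x ≠ y ∧ N.IsLeafV x ∧ N.IsLeafV y ∧
    (p, x) ∈ N.arcs ∧ (p, y) ∈ N.arcs ∧ (gp, p) ∈ N.arcs ∧
    M.root = N.root ∧ M.verts = N.verts \ {x, p} ∧
    M.arcs = (N.arcs \ {(p, x), (p, y), (gp, p)}) ∪ {(gp, y)}

variable {N M : Net V} {x y p gp : V}

namespace IsCherryRedAt

variable (h : IsCherryRedAt N M x y p gp)
include h

theorem mem_arcs {a : V × V} (ha : a ∈ M.arcs) :
    (a ∈ N.arcs ∧ a ≠ (p, x) ∧ a ≠ (p, y) ∧ a ≠ (gp, p)) ∨ a = (gp, y) := by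
  obtain ⟨-, -, -, -, -, -, -, -, harcs⟩ := h
  rw [harcs] at ha
  simpa only [Set.mem_union, Set.mem_sdiff, Set.mem_insert_iff, Set.mem_singleton_iff,
    not_or] using ha

variable (hN : N.IsPhylo)
include hN

theorem in_arc_p : ∀ a ∈ N.arcs, a.2 = p → a = (gp, p) := by
  obtain ⟨hxy, -, -, hpx, hpy, hgp, -⟩ := h
  exact fun a ha ha2 =>
    eq_of_indeg_eq_one (hN.isTreeV_of_ne hpx hpy (by simpa using hxy) rfl).2.1 ha hgp ha2 rfl

theorem image_arcs [DecidableEq V] :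
    Prod.map id (Equiv.swap y p) '' M.arcs = N.arcs \ (Shape.cherry p x y).shapeArcs := by
  have hin_p := h.in_arc_p hN
  obtain ⟨-, -, hly, -, hpy, hgp, -, -, harcs⟩ := h
  have hsplit : ({(p, x), (p, y), (gp, p)} : Set (V × V)) =
      (Shape.cherry p x y).shapeArcs ∪ {(gp, p)} := by
    simp only [Shape.shapeArcs, Set.insert_union, Set.singleton_union]
  rw [harcs, hsplit]
  refine Set.image_sdiff_union_eq_sdiff (fun b ⟨hb, hbC⟩ => ?_) (by simp) ?_
  · simp only [Shape.shapeArcs, Set.mem_union, Set.mem_insert_iff, Set.mem_singleton_iff,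
      not_or] at hbC
    exact Prod.ext rfl (Equiv.swap_apply_of_ne_of_ne
      (fun h => hbC.1.2 (eq_of_indeg_eq_one hly.2.1 hb hpy h rfl))
      (fun h => hbC.2 (hin_p b hb h)))
  · simp [Shape.shapeArcs, hgp, hN.fst_ne_snd hgp]

theorem ne_of_mem_arcs {a : V × V} (ha : a ∈ M.arcs) :
    (a.1 ≠ x ∧ a.1 ≠ y ∧ a.1 ≠ p) ∧ a.2 ≠ x ∧ a.2 ≠ p := by
  have hin_p := h.in_arc_p hN
  have hmem := h.mem_arcs ha
  obtain ⟨hxy, hlx, hly, hpx, hpy, hgp, -⟩ := h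
  have hx_tail := fun {b : V × V} (hb : b ∈ N.arcs) => hN.fst_ne_of_outdeg_eq_zero hlx.2.2 hb
  have hy_tail := fun {b : V × V} (hb : b ∈ N.arcs) => hN.fst_ne_of_outdeg_eq_zero hly.2.2 hb
  rcases hmem with ⟨haN, h1, h2, h3⟩ | rfl
  · refine ⟨⟨hx_tail haN, hy_tail haN, fun h => ?_⟩,
      fun h => h1 (eq_of_indeg_eq_one hlx.2.1 haN hpx h rfl), fun h => h3 (hin_p a haN h)⟩
    exact (hN.eq_or_eq_of_fst_eq hpx hpy haN (by simpa using hxy) rfl h).elim h1 h2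
  · exact ⟨⟨hx_tail (b := (gp, p)) hgp, hy_tail (b := (gp, p)) hgp, hN.fst_ne_snd hgp⟩,
      hxy.symm, (hN.fst_ne_snd hpy).symm⟩

theorem indeg_eq [DecidableEq V] {v : V} (hv : v ∈ M.verts) : M.indeg v = N.indeg v := by
  have himage := h.image_arcs hN
  have hin_p := h.in_arc_p hN
  obtain ⟨-, -, hly, -, -, hgp, -, hverts, -⟩ := h
  rw [hverts] at hv
  simp only [Set.mem_sdiff, Set.mem_insert_iff, Set.mem_singleton_iff, not_or] at hv
  by_cases hvy : v = y
  · subst hvy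
    refine (indeg_eq_one_of_image_arcs (Equiv.injective _) himage (b := (gp, p))
      ⟨hgp, by simp [Shape.shapeArcs, hN.fst_ne_snd hgp]⟩ (by simp)
      fun a ha h _ => hin_p a ha (by simpa using h)).trans hly.2.1.symm
  · refine indeg_eq_of_image_arcs (Equiv.injective _) himage
      (Equiv.swap_apply_of_ne_of_ne hvy hv.2.2) ?_
    rintro a (rfl | rfl)
    exacts [fun h => hv.2.1 h.symm, fun h => hvy h.symm]

theorem isCollapse [DecidableEq V] : IsCollapse N M (.cherry p x y) (Equiv.swap y p) := by
  have himage := h.image_arcs hN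
  have hne := fun {a} (ha : a ∈ M.arcs) => h.ne_of_mem_arcs hN ha
  have hmem := fun {a} (ha : a ∈ M.arcs) => h.mem_arcs ha
  have hindeg := fun {v} (hv : v ∈ M.verts) => h.indeg_eq hN hv
  obtain ⟨hxy, hlx, hly, hpx, hpy, hgp, hroot, hverts, -⟩ := h
  refine
    { root_eq := hroot
      injective := Equiv.injective _
      image_arcs := himage
      fixes_tails := fun a ha => Equiv.swap_apply_of_ne_of_ne (hne ha).1.2.1 (hne ha).1.2.2
      shapeArcs_subset := by simp [Shape.shapeArcs, Set.insert_subset_iff, hpx, hpy]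
      isValid := hxy
      fst_ne_root := fun a ha => by rcases ha with rfl | rfl <;> exact hN.snd_ne_root hgp
      endpoint_not_tail := fun e he a ha => by
        rcases he with rfl | rfl
        exacts [hN.fst_ne_of_outdeg_eq_zero hlx.2.2 ha, hN.fst_ne_of_outdeg_eq_zero hly.2.2 ha]
      verts_subset := hverts ▸ Set.sdiff_subset
      root_mem := by
        rw [hverts, hroot]
        exact ⟨hN.root_mem, by simp [(hN.snd_ne_root hpx).symm, (hN.snd_ne_root hgp).symm]⟩
      mem_verts := fun a ha => by
        have hMN : a.1 ∈ N.verts ∧ a.2 ∈ N.verts := by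
          rcases hmem ha with ⟨haN, -⟩ | rfl
          exacts [⟨hN.fst_mem_verts haN, hN.snd_mem_verts haN⟩,
            ⟨hN.fst_mem_verts (a := (gp, p)) hgp, hN.snd_mem_verts (a := (p, y)) hpy⟩]
        rw [hverts]
        exact ⟨⟨hMN.1, by simp [(hne ha).1.1, (hne ha).1.2.2]⟩, ⟨hMN.2, by simp [(hne ha).2]⟩⟩
      indeg_eq := fun v hv => hindeg hv
      outdeg_eq := fun v hv => outdeg_eq_of_image_arcs (Equiv.injective _) himage
        fun h => (hverts ▸ hv).2 (.inr h)
      transGen := fun a ha => by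
        rcases hmem ha with ⟨haN, -⟩ | rfl
        exacts [.single haN, .head hgp (.single hpy)] }

end IsCherryRedAt

end CherryRed

section ReticCherryRed

/-- `N.ReticCherryRed M` is `∃ x y px py qx qy, IsReticCherryRedAt N M x y px py qx qy`. -/
def IsReticCherryRedAt (N M : Net V) (x y px py qx qy : V) : Prop :=
  x ≠ y ∧ N.IsLeafV x ∧ N.IsLeafV y ∧
    (px, x) ∈ N.arcs ∧ (py, px) ∈ N.arcs ∧ (py, y) ∈ N.arcs ∧
    N.indeg px = 2 ∧ (qx, px) ∈ N.arcs ∧ qx ≠ py ∧ (qy, py) ∈ N.arcs ∧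
    M.root = N.root ∧ M.verts = N.verts \ {px, py} ∧
    M.arcs = (N.arcs \ {(py, px), (qx, px), (px, x), (qy, py), (py, y)}) ∪ {(qx, x), (qy, y)}

variable {N M : Net V} {x y px py qx qy : V}

namespace IsReticCherryRedAt

variable (h : IsReticCherryRedAt N M x y px py qx qy)
include h

theorem mem_arcs {a : V × V} (ha : a ∈ M.arcs) :
    (a ∈ N.arcs ∧ a ≠ (py, px) ∧ a ≠ (qx, px) ∧ a ≠ (px, x) ∧ a ≠ (qy, py) ∧ a ≠ (py, y)) ∨
      a = (qx, x) ∨ a = (qy, y) := by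
  obtain ⟨-, -, -, -, -, -, -, -, -, -, -, -, harcs⟩ := h
  rw [harcs] at ha
  simpa only [Set.mem_union, Set.mem_sdiff, Set.mem_insert_iff, Set.mem_singleton_iff,
    not_or] using ha

variable (hN : N.IsPhylo)
include hN

theorem in_arc_px : ∀ a ∈ N.arcs, a.2 = px → a = (py, px) ∨ a = (qx, px) := by
  obtain ⟨-, -, -, -, hpypx, -, -, hqxpx, hqxpy, -⟩ := h
  exact fun a ha ha2 => hN.eq_or_eq_of_snd_eq hpypx hqxpx ha (by simpa using hqxpy.symm) rfl ha2

theorem in_arc_py : ∀ a ∈ N.arcs, a.2 = py → a = (qy, py) := by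
  obtain ⟨-, -, hly, hpxx, hpypx, hpyy, -, -, -, hqypy, -⟩ := h
  have hpy : N.IsTreeV py := hN.isTreeV_of_ne hpypx hpyy
    (by simpa using hN.fst_ne_of_outdeg_eq_zero hly.2.2 hpxx) rfl
  exact fun a ha ha2 => eq_of_indeg_eq_one hpy.2.1 ha hqypy ha2 rfl

theorem image_arcs [DecidableEq V] :
    Prod.map id (Equiv.swap x px * Equiv.swap y py) '' M.arcs =
      N.arcs \ (Shape.retic px py x y).shapeArcs := by
  have hin_px := h.in_arc_px hN
  have hin_py := h.in_arc_py hN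
  obtain ⟨hxy, hlx, hly, hpxx, hpypx, hpyy, -, hqxpx, hqxpy, hqypy, -, -, harcs⟩ := h
  have hpxy : px ≠ y := hN.fst_ne_of_outdeg_eq_zero hly.2.2 hpxx
  have hpyx : py ≠ x := hN.fst_ne_of_outdeg_eq_zero hlx.2.2 hpypx
  have hpxpy : px ≠ py := (hN.fst_ne_snd hpypx).symm
  have hsplit : ({(py, px), (qx, px), (px, x), (qy, py), (py, y)} : Set (V × V)) =
      (Shape.retic px py x y).shapeArcs ∪ {(qx, px), (qy, py)} := by
    ext
    simp only [Shape.shapeArcs, Set.mem_union, Set.mem_insert_iff, Set.mem_singleton_iff]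
    tauto
  rw [harcs, hsplit]
  refine Set.image_sdiff_union_eq_sdiff (fun b ⟨hb, hbC⟩ => Prod.ext rfl ?_) ?_ ?_
  · simp only [Shape.shapeArcs, Set.mem_union, Set.mem_insert_iff, Set.mem_singleton_iff,
      not_or] at hbC
    have hx : b.2 ≠ x := fun h => hbC.1.1 (eq_of_indeg_eq_one hlx.2.1 hb hpxx h rfl)
    have hpx : b.2 ≠ px := fun h => (hin_px b hb h).elim hbC.1.2.1 hbC.2.1
    have hy : b.2 ≠ y := fun h => hbC.1.2.2 (eq_of_indeg_eq_one hly.2.1 hb hpyy h rfl)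
    have hpy : b.2 ≠ py := fun h => hbC.2.2 (hin_py b hb h)
    simp [Equiv.swap_apply_of_ne_of_ne, *]
  · simp [Set.image_insert_eq, Equiv.swap_apply_of_ne_of_ne hxy hpyx.symm,
      Equiv.swap_apply_of_ne_of_ne hpyx hpxpy.symm]
  · simp [Set.insert_subset_iff, Shape.shapeArcs, hqxpx, hqypy, hqxpy, hN.fst_ne_snd hpxx, hpxy,
      hpyx, hpxpy.symm, hN.fst_ne_snd hpyy]

theorem ne_of_mem_arcs {a : V × V} (ha : a ∈ M.arcs) :
    (a.1 ≠ x ∧ a.1 ≠ px ∧ a.1 ≠ y ∧ a.1 ≠ py) ∧ a.2 ≠ px ∧ a.2 ≠ py := by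
  have hin_px := h.in_arc_px hN
  have hin_py := h.in_arc_py hN
  have hmem := h.mem_arcs ha
  obtain ⟨-, hlx, hly, hpxx, hpypx, hpyy, -, hqxpx, hqxpy, hqypy, -⟩ := h
  have hpx : N.IsReticV px :=
    hN.isReticV_of_ne hpypx hqxpx (by simpa using hqxpy.symm) rfl
  have hx_tail := fun {b : V × V} (hb : b ∈ N.arcs) => hN.fst_ne_of_outdeg_eq_zero hlx.2.2 hb
  have hy_tail := fun {b : V × V} (hb : b ∈ N.arcs) => hN.fst_ne_of_outdeg_eq_zero hly.2.2 hb
  have hpyx : py ≠ x := hx_tail hpypx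
  rcases hmem with ⟨haN, h1, h2, h3, h4, h5⟩ | rfl | rfl
  · refine ⟨⟨hx_tail haN, fun h => h3 (eq_of_outdeg_eq_one hpx.2.2 haN hpxx h rfl),
      hy_tail haN, fun h => (hN.eq_or_eq_of_fst_eq hpypx hpyy haN
        (by simpa using hN.fst_ne_of_outdeg_eq_zero hly.2.2 hpxx) rfl h).elim h1 h5⟩,
      fun h => (hin_px a haN h).elim h1 h2, fun h => h4 (hin_py a haN h)⟩
  · exact ⟨⟨hx_tail (b := (qx, px)) hqxpx, hN.fst_ne_snd hqxpx, hy_tail (b := (qx, px)) hqxpx,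
      hqxpy⟩, (hN.fst_ne_snd hpxx).symm, hpyx.symm⟩
  · refine ⟨⟨hx_tail (b := (qy, py)) hqypy, fun h => hpyx ?_, hy_tail (b := (qy, py)) hqypy,
      hN.fst_ne_snd hqypy⟩, (hy_tail hpxx).symm, (hN.fst_ne_snd hpyy).symm⟩
    exact congrArg Prod.snd (eq_of_outdeg_eq_one hpx.2.2 hqypy hpxx h rfl)

theorem indeg_eq [DecidableEq V] {v : V} (hv : v ∈ M.verts) : M.indeg v = N.indeg v := by
  have himage := h.image_arcs hN
  have hin_px := h.in_arc_px hN
  have hin_py := h.in_arc_py hN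
  obtain ⟨hxy, hlx, hly, hpxx, hpypx, hpyy, -, hqxpx, hqxpy, hqypy, -, hverts, -⟩ := h
  have hpyx : py ≠ x := hN.fst_ne_of_outdeg_eq_zero hlx.2.2 hpypx
  have hpxpy : px ≠ py := (hN.fst_ne_snd hpypx).symm
  rw [hverts] at hv
  simp only [Set.mem_sdiff, Set.mem_insert_iff, Set.mem_singleton_iff, not_or] at hv
  by_cases hvx : v = x
  · subst hvx
    refine (indeg_eq_one_of_image_arcs (Equiv.injective _) himage (b := (qx, px))
      ⟨hqxpx, by simp [Shape.shapeArcs, hqxpy, hN.fst_ne_snd hpxx]⟩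
      (by simp [Equiv.swap_apply_of_ne_of_ne hxy hpyx.symm]) fun a ha h hC => ?_).trans
      hlx.2.1.symm
    have hpx : a.2 = px := by simpa [Equiv.swap_apply_of_ne_of_ne hxy hpyx.symm] using h
    exact (hin_px a ha hpx).resolve_left fun h' => hC (by simp [Shape.shapeArcs, h'])
  by_cases hvy : v = y
  · subst hvy
    refine (indeg_eq_one_of_image_arcs (Equiv.injective _) himage (b := (qy, py))
      ⟨hqypy, by simp [Shape.shapeArcs, hpyx, hpxpy.symm, hN.fst_ne_snd hpyy]⟩
      (by simp [Equiv.swap_apply_of_ne_of_ne hpyx hpxpy.symm]) fun a ha h _ =>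
        hin_py a ha (by simpa [Equiv.swap_apply_of_ne_of_ne hpyx hpxpy.symm] using h)).trans
      hly.2.1.symm
  refine indeg_eq_of_image_arcs (Equiv.injective _) himage
    (by simp [Equiv.swap_apply_of_ne_of_ne, hvx, hvy, hv.2.1, hv.2.2]) ?_
  rintro a (rfl | rfl | rfl)
  exacts [fun h => hvx h.symm, fun h => hv.2.1 h.symm, fun h => hvy h.symm]

theorem isCollapse [DecidableEq V] :
    IsCollapse N M (.retic px py x y) (Equiv.swap x px * Equiv.swap y py) := by
  have himage := h.image_arcs hN
  have hne := fun {a} (ha : a ∈ M.arcs) => h.ne_of_mem_arcs hN ha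
  have hmem := fun {a} (ha : a ∈ M.arcs) => h.mem_arcs ha
  have hindeg := fun {v} (hv : v ∈ M.verts) => h.indeg_eq hN hv
  obtain ⟨hxy, hlx, hly, hpxx, hpypx, hpyy, -, hqxpx, hqxpy, hqypy, hroot, hverts, -⟩ := h
  refine
    { root_eq := hroot
      injective := Equiv.injective _
      image_arcs := himage
      fixes_tails := fun a ha => by
        obtain ⟨⟨h1, h2, h3, h4⟩, -⟩ := hne ha
        simp [Equiv.swap_apply_of_ne_of_ne, *]
      shapeArcs_subset := by simp [Shape.shapeArcs, Set.insert_subset_iff, hpxx, hpypx, hpyy]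
      isValid := ⟨hN.isReticV_of_ne hpypx hqxpx (by simpa using hqxpy.symm) rfl,
        (hN.fst_ne_snd hpypx).symm, hN.fst_ne_of_outdeg_eq_zero hly.2.2 hpxx, hxy⟩
      fst_ne_root := fun a ha => by
        rcases ha with rfl | rfl | rfl
        exacts [hN.snd_ne_root hpypx, hN.snd_ne_root hqypy, hN.snd_ne_root hqypy]
      endpoint_not_tail := fun e he a ha => by
        rcases he with rfl | rfl
        exacts [hN.fst_ne_of_outdeg_eq_zero hlx.2.2 ha, hN.fst_ne_of_outdeg_eq_zero hly.2.2 ha]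
      verts_subset := hverts ▸ Set.sdiff_subset
      root_mem := by
        rw [hverts, hroot]
        exact ⟨hN.root_mem, by simp [(hN.snd_ne_root hpypx).symm, (hN.snd_ne_root hqypy).symm]⟩
      mem_verts := fun a ha => by
        have hMN : a.1 ∈ N.verts ∧ a.2 ∈ N.verts := by
          rcases hmem ha with ⟨haN, -⟩ | rfl | rfl
          exacts [⟨hN.fst_mem_verts haN, hN.snd_mem_verts haN⟩,
            ⟨hN.fst_mem_verts (a := (qx, px)) hqxpx, hN.snd_mem_verts (a := (px, x)) hpxx⟩,
            ⟨hN.fst_mem_verts (a := (qy, py)) hqypy, hN.snd_mem_verts (a := (py, y)) hpyy⟩]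
        rw [hverts]
        obtain ⟨⟨-, h1, -, h2⟩, h3, h4⟩ := hne ha
        exact ⟨⟨hMN.1, by simp [h1, h2]⟩, ⟨hMN.2, by simp [h3, h4]⟩⟩
      indeg_eq := fun v hv => hindeg hv
      outdeg_eq := fun v hv => outdeg_eq_of_image_arcs (Equiv.injective _) himage
        (hverts ▸ hv).2
      transGen := fun a ha => by
        rcases hmem ha with ⟨haN, -⟩ | rfl | rfl
        exacts [.single haN, .head hqxpx (.single hpxx), .head hqypy (.single hpyy)] }

end IsReticCherryRedAt

end ReticCherryRed

section Orchard

variable {N M : Net V}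

theorem RedStep.exists_isCollapse [DecidableEq V] (hN : N.IsPhylo) (h : RedStep N M) :
    ∃ C σ, IsCollapse N M C σ := by
  rcases h with ⟨x, y, p, gp, h⟩ | ⟨x, y, px, py, qx, qy, h⟩
  exacts [⟨_, _, IsCherryRedAt.isCollapse h hN⟩, ⟨_, _, IsReticCherryRedAt.isCollapse h hN⟩]

theorem IsSingleLeaf.isCherryCover_empty (h : M.IsSingleLeaf) : M.IsCherryCover ∅ := by
  obtain ⟨l, -, -, harcs⟩ := h
  refine ⟨by simp, fun a ha hroot => ?_, by simp⟩
  rw [harcs] at ha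
  exact absurd (congrArg Prod.fst ha) hroot

theorem auxAcyclic_empty : AuxAcyclic (∅ : Set (Shape V)) := fun _ h => by
  obtain ⟨_, h, -⟩ := Relation.TransGen.head'_iff.mp h
  exact h.1

theorem IsOrchard.exists_auxAcyclic (hN : N.IsPhylo) (h : N.IsOrchard) :
    ∃ P, N.IsCherryCover P ∧ AuxAcyclic P := by
  classical
  obtain ⟨M, hsteps, hM⟩ := h
  induction hsteps using Relation.ReflTransGen.head_induction_on with
  | refl => exact ⟨∅, hM.isCherryCover_empty, auxAcyclic_empty⟩
  | head hstep _ ih =>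
    obtain ⟨C, σ, hE⟩ := hstep.exists_isCollapse hN
    obtain ⟨P', hP', hacyc⟩ := ih (hE.isPhylo hN)
    exact ⟨_, hE.isCherryCover hP', hE.auxAcyclic hP' hacyc⟩

end Orchard

end Net

/-- If a tree-based network contains two N-fences of length at least 3 joined
by directed paths in the "crossing" pattern, then every cherry cover auxiliary
graph of `N` contains a directed cycle; in particular `N` is not orchard. -/
theorem crossing_nfences_not_orchard {V : Type*} (N : Net V) (hN : N.IsPhylo)
    (lu lv : List (V × V))
    (hlu : Net.IsMaximalZigZag N.nonRootArcs lu)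
    (hlv : Net.IsMaximalZigZag N.nonRootArcs lv)
    (hNu : N.IsNFence lu) (hNv : N.IsNFence lv)
    (hfu : ∃ a : V × V, lu.head? = some a ∧ N.IsReticV a.1)
    (hfv : ∃ a : V × V, lv.head? = some a ∧ N.IsReticV a.1)
    (h i j k : ℕ)
    (hhe : Even h) (hie : Even i) (hje : Even j) (hke : Even k)
    (hk2 : 2 ≤ k) (hkh : k < h) (hh : h ≤ lu.length)
    (hi2 : 2 ≤ i) (hij : i < j) (hj : j ≤ lv.length)
    (hpath1 : Relation.ReflTransGen N.arcRel
      (lu.get ⟨h - 1, by omega⟩).2 (lv.get ⟨i - 1, by omega⟩).1)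
    (hpath2 : Relation.ReflTransGen N.arcRel
      (lv.get ⟨j - 1, by omega⟩).2 (lu.get ⟨k - 1, by omega⟩).1) :
    (∀ P : Set (Shape V), N.IsCherryCover P →
        ∃ B : Shape V, Relation.TransGen (Net.AuxRel P) B B) ∧
    ¬ N.IsOrchard := by
  have head_retic : ∀ {l : List (V × V)}, (∃ a, l.head? = some a ∧ N.IsReticV a.1) →
      ∀ a ∈ l.head?, N.IsReticV a.1 := by
    rintro l ⟨a, ha, hr⟩ b hb
    rw [Option.mem_def, ha, Option.some_inj] at hb
    exact hb ▸ hr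
  have odd_pred : ∀ {n : ℕ}, Even n → 2 ≤ n → Odd (n - 1) := fun hn h2 =>
    Nat.Even.sub_odd (by omega) hn odd_one
  have lt_of_odd : ∀ {n m : ℕ}, Even n → Odd m → n ≤ m → n < m := fun hn hm hle =>
    hle.lt_of_ne fun e => Nat.not_even_iff_odd.mpr hm (e ▸ hn)
  have hhu := lt_of_odd hhe hNu.1 hh
  have hjv := lt_of_odd hje hNv.1 hj
  have hcycle : ∀ P : Set (Shape V), N.IsCherryCover P →
      ∃ B : Shape V, Relation.TransGen (Net.AuxRel P) B B := fun P hP =>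
    Net.exists_transGen_auxRel_self_of_crossing hN hP hlu.1 hlv.1 (head_retic hfu)
      (head_retic hfv) (odd_pred hhe (by omega)) (odd_pred hke hk2) (odd_pred hie hi2)
      (odd_pred hje (by omega)) (by omega) (by omega) (by omega) (by omega)
      (by simpa only [List.get_eq_getElem] using hpath1)
      (by simpa only [List.get_eq_getElem] using hpath2)
  refine ⟨hcycle, fun horch => ?_⟩
  obtain ⟨P, hP, hacyc⟩ := horch.exists_auxAcyclic hN
  obtain ⟨B, hB⟩ := hcycle P hP
  exact hacyc B hB
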